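/- Let G be a symmetric positive definite n×n matrix, and let R and R̂ be n×M and n×M̂ matrices of full column ranks M and M̂ respectively, with colsp(R) ⊆ colsp(R̂). Then the matrix P := R̂ (R̂' G R̂)^{-1} R̂' - R (R' G R)^{-1} R' is positive semi-definite. -/

import Mathlib

/-!
Write `S = R̂ (R̂ᵀ G R̂)⁻¹ R̂ᵀ` and `T = R (Rᵀ G R)⁻¹ Rᵀ`. Then `S G` and `T G` are the
`G`-orthogonal projections onto `colsp R̂ ⊇ colsp R`, so `S G S = S`, `T G T = T` and
`S G T = T = T G S`. Hence `P = S - T` satisfies `Pᵀ G P = P`, which is positive semidefinite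
because `G` is.
-/

open Matrix

namespace Matrix

variable {α : Type*} [CommRing α] {n m k : Type*} [Fintype m]

theorem exists_mul_eq_of_range_mulVecLin_le [Fintype k] {A : Matrix n k α} {B : Matrix n m α}
    (h : LinearMap.range A.mulVecLin ≤ LinearMap.range B.mulVecLin) :
    ∃ C : Matrix m k α, B * C = A := by
  have hcol (j : k) : ∃ c, B *ᵥ c = A.col j := by
    classical
    exact h ⟨Pi.single j 1, by simp⟩
  choose c hc using hcol
  refine ⟨(of c)ᵀ, Matrix.ext fun i j => ?_⟩
  rw [← col_apply A j i, ← hc j]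
  rfl

theorem mulVec_injective_of_rank_eq {K : Type*} [Field K] {A : Matrix n m K}
    (h : A.rank = Fintype.card m) : Function.Injective A.mulVec :=
  mulVec_injective_iff.mpr <| linearIndependent_iff_card_eq_finrank_span.mpr <| by
    rw [← h, rank_eq_finrank_span_cols, Set.finrank]

variable [Fintype n] [DecidableEq m]

theorem nonsing_inv_mul_mul_nonsing_inv (A : Matrix m m α) : A⁻¹ * A * A⁻¹ = A⁻¹ := by
  rcases A.nonsing_inv_cancel_or_zero with ⟨h, -⟩ | h
  · rw [h, Matrix.one_mul]
  · simp [h]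

noncomputable def gramProjector (G : Matrix n n α) (B : Matrix n m α) : Matrix n n α :=
  B * (Bᵀ * G * B)⁻¹ * Bᵀ

variable {G : Matrix n n α}

theorem gramProjector_transpose (hG : Gᵀ = G) (B : Matrix n m α) :
    (gramProjector G B)ᵀ = gramProjector G B := by
  have hgram : (Bᵀ * G * B)ᵀ = Bᵀ * G * B := by
    simp only [transpose_mul, transpose_transpose, hG, Matrix.mul_assoc]
  rw [gramProjector, transpose_mul, transpose_mul, transpose_transpose, transpose_nonsing_inv,
    hgram]
  exact (Matrix.mul_assoc _ _ _).symm

theorem gramProjector_mul_mul_self (G : Matrix n n α) (B : Matrix n m α) :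
    gramProjector G B * G * gramProjector G B = gramProjector G B := by
  calc gramProjector G B * G * gramProjector G B
      = B * ((Bᵀ * G * B)⁻¹ * (Bᵀ * G * B) * (Bᵀ * G * B)⁻¹) * Bᵀ := by
        simp only [gramProjector, Matrix.mul_assoc]
    _ = gramProjector G B := by rw [nonsing_inv_mul_mul_nonsing_inv, gramProjector]

theorem gramProjector_mul_mul_mul_of_isUnit {B : Matrix n m α} (hB : IsUnit (Bᵀ * G * B).det)
    (C : Matrix m k α) : gramProjector G B * G * (B * C) = B * C := by
  calc gramProjector G B * G * (B * C) = B * ((Bᵀ * G * B)⁻¹ * (Bᵀ * G * B) * C) := by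
        simp only [gramProjector, Matrix.mul_assoc]
    _ = B * C := by rw [nonsing_inv_mul _ hB, Matrix.one_mul]

theorem gramProjector_mul_mul_gramProjector_of_mul_eq [Fintype k] [DecidableEq k]
    {B : Matrix n m α} (hB : IsUnit (Bᵀ * G * B).det) {A : Matrix n k α} {C : Matrix m k α}
    (hA : B * C = A) :
    gramProjector G B * G * gramProjector G A = gramProjector G A := by
  have := congrArg (· * ((Aᵀ * G * A)⁻¹ * Aᵀ)) (gramProjector_mul_mul_mul_of_isUnit hB C)
  simpa only [hA, gramProjector, Matrix.mul_assoc] using this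

theorem PosDef.isUnit_det_transpose_mul_mul {G : Matrix n n ℝ} (hG : G.PosDef)
    {B : Matrix n m ℝ} (hB : B.rank = Fintype.card m) : IsUnit (Bᵀ * G * B).det := by
  have := hG.conjTranspose_mul_mul_same (mulVec_injective_of_rank_eq hB)
  rw [conjTranspose_eq_transpose_of_trivial] at this
  exact (isUnit_iff_isUnit_det _).mp this.isUnit

end Matrix

theorem projection_difference_posSemidef_general
    (n M Mhat : ℕ) (G : Matrix (Fin n) (Fin n) ℝ)
    (R : Matrix (Fin n) (Fin M) ℝ) (Rhat : Matrix (Fin n) (Fin Mhat) ℝ)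
    (hG : G.PosDef) (hRhat : Rhat.rank = Mhat)
    (hcolsp : LinearMap.range R.mulVecLin ≤ LinearMap.range Rhat.mulVecLin) :
    (Rhat * (Rhatᵀ * G * Rhat)⁻¹ * Rhatᵀ - R * (Rᵀ * G * R)⁻¹ * Rᵀ).PosSemidef := by
  obtain ⟨C, hC⟩ := exists_mul_eq_of_range_mulVecLin_le hcolsp
  have hGsymm : Gᵀ = G := by simpa [conjTranspose_eq_transpose_of_trivial] using hG.isHermitian.eq
  have hunit : IsUnit (Rhatᵀ * G * Rhat).det :=
    hG.isUnit_det_transpose_mul_mul (hRhat.trans (Fintype.card_fin Mhat).symm)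
  change (gramProjector G Rhat - gramProjector G R).PosSemidef
  set S := gramProjector G Rhat
  set T := gramProjector G R
  have hS : Sᵀ = S := gramProjector_transpose hGsymm Rhat
  have hT : Tᵀ = T := gramProjector_transpose hGsymm R
  have hSS : S * G * S = S := gramProjector_mul_mul_self G Rhat
  have hTT : T * G * T = T := gramProjector_mul_mul_self G R
  have hST : S * G * T = T := gramProjector_mul_mul_gramProjector_of_mul_eq hunit hC
  have hTS : T * G * S = T := by
    simpa only [transpose_mul, hS, hT, hGsymm, Matrix.mul_assoc]
      using congrArg transpose hST
  have hP : (S - T)ᵀ * G * (S - T) = S - T := by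
    simp only [transpose_sub, hS, hT, sub_mul, mul_sub, hSS, hTT, hST, hTS]
    abel
  simpa only [conjTranspose_eq_transpose_of_trivial, hP]
    using hG.posSemidef.conjTranspose_mul_mul_same (S - T)

/-- If G is symmetric positive definite, R and R̂ have full column ranks
M and M̂, and colsp(R) ⊆ colsp(R̂), then
P = R̂ (R̂' G R̂)⁻¹ R̂' - R (R' G R)⁻¹ R' is positive semi-definite. -/
theorem projection_difference_posSemidef
    (n M Mhat : ℕ) (G : Matrix (Fin n) (Fin n) ℝ)
    (R : Matrix (Fin n) (Fin M) ℝ) (Rhat : Matrix (Fin n) (Fin Mhat) ℝ)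
    (hG : G.PosDef) (hR : R.rank = M) (hRhat : Rhat.rank = Mhat)
    (hcolsp : LinearMap.range R.mulVecLin ≤ LinearMap.range Rhat.mulVecLin) :
    (Rhat * (Rhatᵀ * G * Rhat)⁻¹ * Rhatᵀ - R * (Rᵀ * G * R)⁻¹ * Rᵀ).PosSemidef :=
  projection_difference_posSemidef_general n M Mhat G R Rhat hG hRhat hcolsp
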